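/- Let D be a symmetric probability measure on ℝ^{n×m} and let p : ℝ^{n×m} → ℝ^n be a payment rule such that B ↦ Σ_{i=1}^n p(B)_i is measurable and D-integrable. Then the symmetrized payment rule p̃(B) = (1/(n!·m!)) Σ_{σ ∈ S_n} Σ_{τ ∈ S_m} p^{σ,τ}(B) achieves the same expected revenue as p: ∫ Σ_{i=1}^n p̃(B)_i dD(B) = ∫ Σ_{i=1}^n p(B)_i dD(B). -/

import Mathlib

open BigOperators Finset MeasureTheory

namespace AuctionDesign

/-- Relabeled matrix: `(σ·B·τ) i j = B (σ⁻¹ i) (τ⁻¹ j)`. -/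
def relabelM {n m : ℕ} (σ : Equiv.Perm (Fin n)) (τ : Equiv.Perm (Fin m))
    (B : Fin n → Fin m → ℝ) : Fin n → Fin m → ℝ :=
  fun i j => B (σ⁻¹ i) (τ⁻¹ j)

/-- Relabeled vector: `(σ·x) i = x (σ⁻¹ i)`. -/
def relabelV {n : ℕ} (σ : Equiv.Perm (Fin n)) (x : Fin n → ℝ) : Fin n → ℝ :=
  fun i => x (σ⁻¹ i)

/-- Relabeled allocation rule `g^{σ,τ}(B) = σ⁻¹ · g(σ·B·τ) · τ⁻¹`. -/
def relabelAlloc {n m : ℕ} (g : (Fin n → Fin m → ℝ) → Fin n → Fin m → ℝ)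
    (σ : Equiv.Perm (Fin n)) (τ : Equiv.Perm (Fin m)) :
    (Fin n → Fin m → ℝ) → Fin n → Fin m → ℝ :=
  fun B => relabelM σ⁻¹ τ⁻¹ (g (relabelM σ τ B))

/-- Relabeled payment rule `p^{σ,τ}(B) = σ⁻¹ · p(σ·B·τ)`. -/
def relabelPay {n m : ℕ} (p : (Fin n → Fin m → ℝ) → Fin n → ℝ)
    (σ : Equiv.Perm (Fin n)) (τ : Equiv.Perm (Fin m)) :
    (Fin n → Fin m → ℝ) → Fin n → ℝ :=
  fun B => relabelV σ⁻¹ (p (relabelM σ τ B))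

/-- Utility of bidder `i` with valuation row `v` at bid profile `B`. -/
def utility {n m : ℕ} (g : (Fin n → Fin m → ℝ) → Fin n → Fin m → ℝ)
    (p : (Fin n → Fin m → ℝ) → Fin n → ℝ)
    (i : Fin n) (v : Fin m → ℝ) (B : Fin n → Fin m → ℝ) : ℝ :=
  ∑ j, g B i j * v j - p B i

/-- Allocation constraints. -/
def AllocConstraints {n m : ℕ} (g : (Fin n → Fin m → ℝ) → Fin n → Fin m → ℝ) : Prop :=
  (∀ B i j, 0 ≤ g B i j ∧ g B i j ≤ 1) ∧ ∀ B j, ∑ i, g B i j ≤ 1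

/-- Nonnegative payments. -/
def NonnegPay {n m : ℕ} (p : (Fin n → Fin m → ℝ) → Fin n → ℝ) : Prop :=
  ∀ B i, 0 ≤ p B i

/-- Individual rationality. -/
def IR {n m : ℕ} (g : (Fin n → Fin m → ℝ) → Fin n → Fin m → ℝ)
    (p : (Fin n → Fin m → ℝ) → Fin n → ℝ) : Prop :=
  ∀ B i, p B i ≤ ∑ j, g B i j * B i j

/-- Dominant strategy incentive compatibility. -/
def DSIC {n m : ℕ} (g : (Fin n → Fin m → ℝ) → Fin n → Fin m → ℝ)
    (p : (Fin n → Fin m → ℝ) → Fin n → ℝ) : Prop :=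
  ∀ B (i : Fin n) (b' : Fin m → ℝ),
    utility g p i (B i) (Function.update B i b') ≤ utility g p i (B i) B

/-- Permutation-equivariance of an allocation rule. -/
def AllocEquivariant {n m : ℕ} (g : (Fin n → Fin m → ℝ) → Fin n → Fin m → ℝ) : Prop :=
  ∀ (σ : Equiv.Perm (Fin n)) (τ : Equiv.Perm (Fin m)) B,
    g (relabelM σ τ B) = relabelM σ τ (g B)

/-- Permutation-equivariance of a payment rule. -/
def PayEquivariant {n m : ℕ} (p : (Fin n → Fin m → ℝ) → Fin n → ℝ) : Prop :=
  ∀ (σ : Equiv.Perm (Fin n)) (τ : Equiv.Perm (Fin m)) B,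
    p (relabelM σ τ B) = relabelV σ (p B)

/-- A symmetric probability measure on bid matrices. -/
def SymmetricMeasure {n m : ℕ} (D : Measure (Fin n → Fin m → ℝ)) : Prop :=
  ∀ (σ : Equiv.Perm (Fin n)) (τ : Equiv.Perm (Fin m)),
    Measure.map (relabelM σ τ) D = D

/-! Summing over bidders undoes the relabeling of the payment vector, so the revenue of
`p^{σ,τ}` at `B` is the revenue of `p` at `σ·B·τ`; symmetry of `D` makes `B ↦ σ·B·τ`
measure-preserving, so each of the `n!·m!` terms of the average has the expected revenue of `p`. -/

theorem integral_finsetSum_comp_of_measurePreserving {α E ι : Type*} [MeasurableSpace α]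
    [NormedAddCommGroup E] [NormedSpace ℝ E] {μ : Measure α} (s : Finset ι)
    {T : ι → α → α} (hT : ∀ k ∈ s, MeasurePreserving (T k) μ μ) {f : α → E}
    (hf : Integrable f μ) :
    ∫ x, ∑ k ∈ s, f (T k x) ∂μ = #s • ∫ x, f x ∂μ := by
  rw [integral_finsetSum (f := fun k x => f (T k x)) s
    fun k hk => (hT k hk).integrable_comp_of_integrable hf, ← Finset.sum_const]
  refine Finset.sum_congr rfl fun k hk => ?_
  have hmap := (hT k hk).map_eq
  have hf' : AEStronglyMeasurable f (μ.map (T k)) := by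
    rw [hmap]; exact hf.aestronglyMeasurable
  rw [← integral_map (hT k hk).measurable.aemeasurable hf', hmap]

theorem measurable_relabelM {n m : ℕ} (σ : Equiv.Perm (Fin n)) (τ : Equiv.Perm (Fin m)) :
    Measurable (relabelM σ τ) := by
  unfold relabelM
  fun_prop

theorem SymmetricMeasure.measurePreserving {n m : ℕ} {D : Measure (Fin n → Fin m → ℝ)}
    (hD : SymmetricMeasure D) (σ : Equiv.Perm (Fin n)) (τ : Equiv.Perm (Fin m)) :
    MeasurePreserving (relabelM σ τ) D D :=
  ⟨measurable_relabelM σ τ, hD σ τ⟩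

theorem sum_relabelPay {n m : ℕ} (p : (Fin n → Fin m → ℝ) → Fin n → ℝ)
    (σ : Equiv.Perm (Fin n)) (τ : Equiv.Perm (Fin m)) (B : Fin n → Fin m → ℝ) :
    ∑ i, relabelPay p σ τ B i = ∑ i, p (relabelM σ τ B) i := by
  simpa only [relabelPay, relabelV, inv_inv] using Equiv.sum_comp σ (p (relabelM σ τ B))

theorem symmetrized_expected_revenue_general {n m : ℕ}
    (D : Measure (Fin n → Fin m → ℝ))
    (hD : SymmetricMeasure D)
    (p : (Fin n → Fin m → ℝ) → Fin n → ℝ)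
    (hint : Integrable (fun B => ∑ i, p B i) D)
    (pt : (Fin n → Fin m → ℝ) → Fin n → ℝ)
    (hpt : ∀ B, pt B = (1 / ((Nat.factorial n : ℝ) * (Nat.factorial m : ℝ))) •
      ∑ σ : Equiv.Perm (Fin n), ∑ τ : Equiv.Perm (Fin m), relabelPay p σ τ B) :
    ∫ B, (∑ i, pt B i) ∂D = ∫ B, (∑ i, p B i) ∂D := by
  set c : ℝ := 1 / ((Nat.factorial n : ℝ) * (Nat.factorial m : ℝ))
  have hsum : ∀ B, ∑ i, pt B i =
      c * ∑ στ : Equiv.Perm (Fin n) × Equiv.Perm (Fin m),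
        ∑ i, p (relabelM στ.1 στ.2 B) i := by
    intro B
    simp only [hpt, Pi.smul_apply, Finset.sum_apply, smul_eq_mul, ← Finset.mul_sum,
      Fintype.sum_prod_type, ← sum_relabelPay]
    rw [Finset.sum_comm]
    exact congrArg _ (Finset.sum_congr rfl fun σ _ => Finset.sum_comm)
  calc ∫ B, ∑ i, pt B i ∂D
      = c * ∫ B, ∑ στ : Equiv.Perm (Fin n) × Equiv.Perm (Fin m),
          ∑ i, p (relabelM στ.1 στ.2 B) i ∂D := by
        simp_rw [hsum]
        exact integral_const_mul c _
    _ = c * ((n.factorial * m.factorial : ℕ) • ∫ B, ∑ i, p B i ∂D) := by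
        rw [integral_finsetSum_comp_of_measurePreserving _
          (fun στ _ => hD.measurePreserving στ.1 στ.2) hint]
        simp [Fintype.card_perm]
    _ = ∫ B, ∑ i, p B i ∂D := by
        simp only [c, nsmul_eq_mul]
        push_cast
        field_simp

/-- under a symmetric measure, the symmetrized payment rule has
the same expected revenue as the original one. -/
theorem symmetrized_expected_revenue {n m : ℕ} (hn : 0 < n) (hm : 0 < m)
    (D : Measure (Fin n → Fin m → ℝ)) [IsProbabilityMeasure D]
    (hD : SymmetricMeasure D)
    (p : (Fin n → Fin m → ℝ) → Fin n → ℝ)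
    (hmeas : Measurable fun B => ∑ i, p B i)
    (hint : Integrable (fun B => ∑ i, p B i) D)
    (pt : (Fin n → Fin m → ℝ) → Fin n → ℝ)
    (hpt : ∀ B, pt B = (1 / ((Nat.factorial n : ℝ) * (Nat.factorial m : ℝ))) •
      ∑ σ : Equiv.Perm (Fin n), ∑ τ : Equiv.Perm (Fin m), relabelPay p σ τ B) :
    ∫ B, (∑ i, pt B i) ∂D = ∫ B, (∑ i, p B i) ∂D :=
  symmetrized_expected_revenue_general D hD p hint pt hpt
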